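/- Let L ≥ 2 and 0 < s0 < L be integers, let t ≥ 0, and let r ∈ ℤ be such that s0 + 2r − t ∈ {0, L} (i.e., the corresponding endpoint lies on an absorbing barrier). Then the method-of-images expression vanishes: Σ_{k∈ℤ} [C(t, r+kL) − C(t, r+s0+kL)] = 0. -/

import Mathlib

/-
Reflection `k ↦ t - k` of the binomial row maps the image class `r + Lℤ` onto the class
`t - r + Lℤ`, which the barrier condition identifies with `r + s0 + Lℤ`; so the two image sums
coincide, and both are finite sums.
-/

/-- Binomial coefficient `C(n,k)` with integer lower index `k`, equal to `0`
unless `0 ≤ k ≤ n`. -/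
def Cb (n : ℕ) (k : ℤ) : ℤ := if 0 ≤ k ∧ k ≤ (n : ℤ) then (n.choose k.toNat : ℤ) else 0

lemma Cb_symm (n : ℕ) (k : ℤ) : Cb n k = Cb n (n - k) := by
  unfold Cb
  by_cases h : 0 ≤ k ∧ k ≤ (n : ℤ)
  · rw [if_pos h, if_pos (by omega), show ((n : ℤ) - k).toNat = n - k.toNat by omega,
      Nat.choose_symm (by omega)]
  · rw [if_neg h, if_neg (by omega)]

lemma support_Cb_subset (n : ℕ) : Function.support (Cb n) ⊆ Set.Icc 0 (n : ℤ) := by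
  intro k hk
  by_contra h
  exact hk (if_neg h)

lemma summable_Cb_add_mul (n : ℕ) (a : ℤ) {L : ℤ} (hL : L ≠ 0) :
    Summable fun k : ℤ => Cb n (a + k * L) := by
  have hinj : Function.Injective fun k : ℤ => a + k * L := fun k l hkl => by
    simpa [hL] using hkl
  exact summable_of_hasFiniteSupport
    (((Set.finite_Icc 0 (n : ℤ)).subset (support_Cb_subset n)).preimage hinj.injOn)

lemma tsum_add_mul_eq_of_modEq {α : Type*} [AddCommMonoid α] [TopologicalSpace α]
    (f : ℤ → α) {L a b : ℤ} (h : a ≡ b [ZMOD L]) :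
    ∑' k : ℤ, f (a + k * L) = ∑' k : ℤ, f (b + k * L) := by
  obtain ⟨m, hm⟩ := h.dvd
  rw [← (Equiv.addRight m).tsum_eq]
  congr 1
  funext k
  simp only [Equiv.coe_addRight]
  congr 1
  linear_combination -hm

lemma tsum_Cb_add_mul_reflect (n : ℕ) (a L : ℤ) :
    ∑' k : ℤ, Cb n (a + k * L) = ∑' k : ℤ, Cb n (n - a + k * L) := by
  rw [← (Equiv.neg ℤ).tsum_eq]
  congr 1
  funext k
  rw [Cb_symm]
  simp only [Equiv.neg_apply]
  ring_nf

theorem stmt_4_general (L : ℕ) (hL : 2 ≤ L) (s0 : ℤ)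
    (t : ℕ) (r : ℤ) (hbar : s0 + 2 * r - t = 0 ∨ s0 + 2 * r - t = (L : ℤ)) :
    ∑' k : ℤ, (Cb t (r + k * L) - Cb t (r + s0 + k * L)) = 0 := by
  have hL0 : (L : ℤ) ≠ 0 := by omega
  have hclass : (t : ℤ) - r ≡ r + s0 [ZMOD L] := by
    refine Int.modEq_iff_dvd.mpr ?_
    rcases hbar with h | h
    · exact ⟨0, by linear_combination h⟩
    · exact ⟨1, by linear_combination h⟩
  rw [(summable_Cb_add_mul t r hL0).tsum_sub (summable_Cb_add_mul t (r + s0) hL0), sub_eq_zero,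
    tsum_Cb_add_mul_reflect, tsum_add_mul_eq_of_modEq (Cb t) hclass]

/-- If the endpoint `s0 + 2r - t` lies on an absorbing barrier
(`0` or `L`), then the method-of-images expression vanishes. -/
theorem stmt_4 (L : ℕ) (hL : 2 ≤ L) (s0 : ℤ) (hs0 : 0 < s0) (hs0L : s0 < (L : ℤ))
    (t : ℕ) (r : ℤ) (hbar : s0 + 2 * r - t = 0 ∨ s0 + 2 * r - t = (L : ℤ)) :
    ∑' k : ℤ, (Cb t (r + k * L) - Cb t (r + s0 + k * L)) = 0 :=
  stmt_4_general L hL s0 t r hbar
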